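/- For every n ≥ 3 and any two distinct vectors a, b ∈ V_n with Q_0(a) = Q_0(b) = 0, the intersection H_a ∩ H_b has exactly 4^{n−1} + 2^{n−1} − 1 points. -/

import Mathlib

/-- The symplectic vector space `V_n = (ZMod 2)^(2n)` of the n-qubit real Pauli group. -/
abbrev V (n : ℕ) : Type := Fin (2 * n) → ZMod 2

/-- The index `2i-1` (0-based: `2i`). -/
def i0 {n : ℕ} (i : Fin n) : Fin (2 * n) := ⟨2 * i.1, by have := i.isLt; omega⟩

/-- The index `2i` (0-based: `2i+1`). -/
def i1 {n : ℕ} (i : Fin n) : Fin (2 * n) := ⟨2 * i.1 + 1, by have := i.isLt; omega⟩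

/-- The symplectic form `⟨x,y⟩ = Σ_{i=1}^n (x_{2i−1} y_{2i} + x_{2i} y_{2i−1})`. -/
def sform {n : ℕ} (x y : V n) : ZMod 2 :=
  ∑ i : Fin n, (x (i0 i) * y (i1 i) + x (i1 i) * y (i0 i))

/-- The point set `P = V_n \ {0}` of the incidence geometry `G_n`. -/
def P (n : ℕ) : Set (V n) := {x | x ≠ 0}

/-- The line set `L = {{a,b,a+b} : a,b ∈ P, a ≠ b, ⟨a,b⟩ = 0}` of `G_n`. -/
def Lines (n : ℕ) : Set (Set (V n)) :=
  {l | ∃ a b : V n, a ∈ P n ∧ b ∈ P n ∧ a ≠ b ∧ sform a b = 0 ∧ l = {a, b, a + b}}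

/-- A subset `H ⊆ P` satisfies condition (H1) if every line meets it in exactly
one point or is contained in it. -/
def IsH1 {n : ℕ} (H : Set (V n)) : Prop :=
  H ⊆ P n ∧ ∀ l ∈ Lines n, (H ∩ l).ncard = 1 ∨ l ⊆ H

/-- A geometric hyperplane: a subset satisfying (H1) which is not the full point set. -/
def IsHyperplane {n : ℕ} (H : Set (V n)) : Prop := IsH1 H ∧ H ≠ P n

/-- `A ⊞ B`: the complement in `P` of the symmetric difference of `A` and `B`. -/
def boxAdd {n : ℕ} (A B : Set (V n)) : Set (V n) := P n \ (symmDiff A B)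

/-- The quadratic form `Q_0(x) = Σ_{i=1}^n x_{2i−1} x_{2i}`. -/
def Q0 {n : ℕ} (x : V n) : ZMod 2 := ∑ i : Fin n, x (i0 i) * x (i1 i)

/-- The quadratic form `Q_p(x) = Q_0(x) + ⟨p,x⟩`. -/
def Qf {n : ℕ} (p x : V n) : ZMod 2 := Q0 x + sform p x

/-- The perp-set hyperplane `C_p = {x ∈ P : ⟨p,x⟩ = 0}`. -/
def Cset {n : ℕ} (p : V n) : Set (V n) := {x ∈ P n | sform p x = 0}

/-- The quadric hyperplane `H_p = {x ∈ P : Q_p(x) = 0}`. -/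
def Hset {n : ℕ} (p : V n) : Set (V n) := {x ∈ P n | Qf p x = 0}

/-- The symplectic transvection `t_p : x ↦ x + ⟨p,x⟩·p`. -/
def tv {n : ℕ} (p : V n) (x : V n) : V n := x + sform p x • p

/-! The sign character `u ↦ (-1)^u` turns the number of common zeros of `Q_a` and `Q_b` into
`¼ Σ_x (1 + (-1)^{Q_a(x)}) (1 + (-1)^{Q_b(x)})`. When `Q_0(c) = 0` we have
`Q_c(x) = Q_0(x + c)`, so each single sum is `Σ_x (-1)^{Q_0(x)} = 2^n`, which factors over the
`n` hyperbolic planes. The mixed term is `Σ_x (-1)^{⟨a+b, x⟩}`, which vanishes because the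
symplectic form is nondegenerate and `a + b ≠ 0`. Hence `4 |(H_a ∩ H_b) ∪ {0}| = 4^n + 2·2^n`. -/

open Finset

def signChar : AddChar (ZMod 2) ℤ := AddChar.zmodChar 2 (neg_one_sq : (-1 : ℤ) ^ 2 = 1)

lemma signChar_apply : ∀ u : ZMod 2, signChar u = if u = 0 then 1 else -1 := by decide

lemma signChar_sum {ι : Type*} (s : Finset ι) (f : ι → ZMod 2) :
    signChar (∑ i ∈ s, f i) = ∏ i ∈ s, signChar (f i) := by
  induction s using Finset.cons_induction with
  | empty => simp
  | cons i s hi ih => rw [sum_cons, prod_cons, AddChar.map_add_eq_mul, ih]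

lemma sum_signChar_eq_zero {G : Type*} [AddGroup G] [Fintype G] (f : G →+ ZMod 2) {e : G}
    (he : f e = 1) : ∑ x, signChar (f x) = 0 :=
  AddChar.sum_eq_zero_of_ne_one (ψ := signChar.compAddMonoidHom f)
    (AddChar.ne_one_iff.2 ⟨e, by simp [he, signChar_apply]⟩)

lemma four_mul_card_filter_eq_sum {α : Type*} [Fintype α] (f g : α → ZMod 2) :
    4 * (#{x | f x = 0 ∧ g x = 0} : ℤ) = ∑ x, (1 + signChar (f x)) * (1 + signChar (g x)) := by
  have indicator : ∀ u v : ZMod 2,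
      (1 + signChar u) * (1 + signChar v) = if u = 0 ∧ v = 0 then 4 else 0 := by decide
  simp only [indicator, sum_ite, sum_const_zero, add_zero, sum_const, nsmul_eq_mul, mul_comm]

lemma exists_i0_or_i1 {n : ℕ} (j : Fin (2 * n)) : ∃ i : Fin n, i0 i = j ∨ i1 i = j :=
  ⟨⟨j / 2, by omega⟩, by simp only [i0, i1, Fin.ext_iff]; omega⟩

lemma i0_injective {n : ℕ} : Function.Injective (i0 (n := n)) := fun i j h => by
  simpa [i0, Fin.ext_iff] using h

lemma i1_injective {n : ℕ} : Function.Injective (i1 (n := n)) := fun i j h => by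
  simpa [i1, Fin.ext_iff] using h

lemma i0_ne_i1 {n : ℕ} (i j : Fin n) : i0 i ≠ i1 j := by
  simp only [i0, i1, ne_eq, Fin.ext_iff]; omega

def toPairs {n : ℕ} (x : V n) (i : Fin n) : ZMod 2 × ZMod 2 := (x (i0 i), x (i1 i))

lemma toPairs_bijective (n : ℕ) : Function.Bijective (toPairs (n := n)) := by
  refine (Fintype.bijective_iff_injective_and_card _).2 ⟨fun x y h => funext fun j => ?_, ?_⟩
  · obtain ⟨i, rfl | rfl⟩ := exists_i0_or_i1 j
    · exact congrArg Prod.fst (congrFun h i)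
    · exact congrArg Prod.snd (congrFun h i)
  · simp [pow_mul]

lemma sum_prod_toPairs {n : ℕ} {M : Type*} [CommSemiring M] (g : ZMod 2 × ZMod 2 → M) :
    ∑ x : V n, ∏ i, g (toPairs x i) = (∑ p, g p) ^ n := by
  rw [Fintype.sum_bijective _ (toPairs_bijective n) _ (fun y => ∏ i, g (y i)) fun _ => rfl,
    ← Fintype.prod_sum, prod_const, card_univ, Fintype.card_fin]

lemma sum_signChar_Q0 (n : ℕ) : ∑ x : V n, signChar (Q0 x) = 2 ^ n := by
  have hyperbolic_plane : ∑ p : ZMod 2 × ZMod 2, signChar (p.1 * p.2) = 2 := by decide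
  simp only [Q0, signChar_sum]
  exact (sum_prod_toPairs fun p => signChar (p.1 * p.2)).trans (by rw [hyperbolic_plane])

lemma sform_add_left {n : ℕ} (a b x : V n) : sform (a + b) x = sform a x + sform b x := by
  simp only [sform, ← sum_add_distrib, Pi.add_apply]
  exact sum_congr rfl fun i _ => by ring

lemma sform_add_right {n : ℕ} (c x y : V n) : sform c (x + y) = sform c x + sform c y := by
  simp only [sform, ← sum_add_distrib, Pi.add_apply]
  exact sum_congr rfl fun i _ => by ring

lemma Q0_add {n : ℕ} (x y : V n) : Q0 (x + y) = Q0 x + Q0 y + sform y x := by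
  simp only [Q0, sform, ← sum_add_distrib, Pi.add_apply]
  exact sum_congr rfl fun i _ => by ring

lemma sform_single_i0 {n : ℕ} (c : V n) (i : Fin n) :
    sform c (Pi.single (i0 i) 1) = c (i1 i) := by
  rw [sform, sum_eq_single i]
  · simp [i0_ne_i1]
  · intro j _ hj
    simp [i0_injective.ne hj, (i0_ne_i1 i j).symm]
  · simp

lemma sform_single_i1 {n : ℕ} (c : V n) (i : Fin n) :
    sform c (Pi.single (i1 i) 1) = c (i0 i) := by
  rw [sform, sum_eq_single i]
  · simp [(i0_ne_i1 i i).symm]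
  · intro j _ hj
    simp [i1_injective.ne hj, (i0_ne_i1 j i).symm]
  · simp

lemma exists_sform_eq_one {n : ℕ} {c : V n} (hc : c ≠ 0) : ∃ e, sform c e = 1 := by
  obtain ⟨j, hj⟩ : ∃ j, c j ≠ 0 := Function.ne_iff.1 hc
  have hj1 : c j = 1 := by generalize c j = u at hj; revert u; decide
  obtain ⟨i, rfl | rfl⟩ := exists_i0_or_i1 j
  · exact ⟨_, (sform_single_i1 c i).trans hj1⟩
  · exact ⟨_, (sform_single_i0 c i).trans hj1⟩

lemma sum_signChar_sform {n : ℕ} {c : V n} (hc : c ≠ 0) : ∑ x, signChar (sform c x) = 0 :=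
  have ⟨_, he⟩ := exists_sform_eq_one hc
  sum_signChar_eq_zero (AddMonoidHom.mk' (sform c) (sform_add_right c)) he

lemma Qf_eq_Q0_add {n : ℕ} {c : V n} (hc : Q0 c = 0) (x : V n) : Qf c x = Q0 (x + c) := by
  rw [Q0_add, hc, Qf, add_zero]

lemma Qf_zero {n : ℕ} (c : V n) : Qf c 0 = 0 := by
  simp [Qf, Q0, sform]

lemma Qf_add_Qf {n : ℕ} (a b x : V n) : Qf a x + Qf b x = sform (a + b) x := by
  rw [Qf, Qf, sform_add_left]
  linear_combination CharTwo.add_self_eq_zero (Q0 x)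

lemma sum_signChar_Qf {n : ℕ} {c : V n} (hc : Q0 c = 0) : ∑ x, signChar (Qf c x) = 2 ^ n := by
  simp_rw [Qf_eq_Q0_add hc]
  exact (Equiv.sum_comp (Equiv.addRight c) fun y => signChar (Q0 y)).trans (sum_signChar_Q0 n)

lemma four_mul_card_common_zeros_Qf {n : ℕ} {a b : V n} (hab : a ≠ b) (ha : Q0 a = 0)
    (hb : Q0 b = 0) : 4 * (#{x | Qf a x = 0 ∧ Qf b x = 0} : ℤ) = 4 ^ n + 2 * 2 ^ n := by
  have hab' : a + b ≠ 0 := ZModModule.sub_eq_add a b ▸ sub_ne_zero.2 hab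
  rw [four_mul_card_filter_eq_sum]
  calc ∑ x, (1 + signChar (Qf a x)) * (1 + signChar (Qf b x))
      = ∑ x, (1 + signChar (Qf a x) + signChar (Qf b x) + signChar (sform (a + b) x)) := by
        simp_rw [← Qf_add_Qf, AddChar.map_add_eq_mul]
        exact sum_congr rfl fun x _ => by ring
    _ = Fintype.card (V n) + 2 ^ n + 2 ^ n + 0 := by
        simp only [sum_add_distrib, sum_const, card_univ, nsmul_one, sum_signChar_Qf ha,
          sum_signChar_Qf hb, sum_signChar_sform hab']
    _ = 4 ^ n + 2 * 2 ^ n := by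
        rw [Fintype.card_fun, ZMod.card, Fintype.card_fin, pow_mul]
        push_cast
        ring

lemma Hset_inter_Hset {n : ℕ} (a b : V n) :
    Hset a ∩ Hset b = ↑((univ.filter fun x => Qf a x = 0 ∧ Qf b x = 0).erase 0) := by
  ext x
  simp only [Hset, P, Set.mem_inter_iff, Set.mem_ofPred_eq, coe_erase, coe_filter, mem_univ,
    true_and, Set.mem_sdiff, Set.mem_singleton_iff]
  tauto

theorem stmt18_general (n : ℕ) (a b : V n) (hab : a ≠ b)
    (ha : Q0 a = 0) (hb : Q0 b = 0) :
    (Hset a ∩ Hset b).ncard = 4 ^ (n - 1) + 2 ^ (n - 1) - 1 := by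
  obtain ⟨m, rfl⟩ : ∃ m, n = m + 1 := Nat.exists_eq_succ_of_ne_zero <| by
    rintro rfl
    exact hab (funext fun j => absurd j.isLt (by simp))
  have hcount := four_mul_card_common_zeros_Qf hab ha hb
  rw [Hset_inter_Hset, Set.ncard_coe_finset, card_erase_of_mem (by simp [Qf_zero]),
    Nat.add_sub_cancel]
  congr 1
  have : (4 : ℤ) * #{x | Qf a x = 0 ∧ Qf b x = 0} = 4 * (4 ^ m + 2 ^ m) := by
    rw [hcount]; ring
  exact_mod_cast mul_left_cancel₀ four_ne_zero this

theorem stmt18 (n : ℕ) (hn : 3 ≤ n) (a b : V n) (hab : a ≠ b)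
    (ha : Q0 a = 0) (hb : Q0 b = 0) :
    (Hset a ∩ Hset b).ncard = 4 ^ (n - 1) + 2 ^ (n - 1) - 1 :=
  stmt18_general n a b hab ha hb
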